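/- arXiv:1810.12861 — 4 statements merged into one kernel-verified Lean document; each statement's English description precedes it below -/
import Mathlib

section
/- Let N be a finite ground set, (N, 𝓜) a matroid of rank K, Z a monotone, submodular, normalized set function on N, and g a greedy sequence for (Z, 𝓜) with output G. Then for every Ω ∈ 𝓜 one has 2·Z(G) ≥ Z(Ω); equivalently, Z(G)/Z(Ω) ≥ 1/2 whenever Z(Ω) > 0. -/
/-!
Every element `q` of `Ω` outside `G` becomes dependent on some prefix `Gⁱ` of the greedy
sequence; since `Ω` is independent, the augmentation axiom shows that at most `i` elements of
`Ω` are dependent on `Gⁱ`. By Hall's theorem each such `q` can therefore be matched injectively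
to a step `i` at which it was still a feasible candidate, so the greedy choice gives
`ρ_q(G) ≤ ρ_q(Gⁱ⁻¹) ≤ ρ_{gᵢ}(Gⁱ⁻¹)`. Summing, `Z(Ω) - Z(G) ≤ ∑ ρ_q(G) ≤ ∑ᵢ ρ_{gᵢ}(Gⁱ⁻¹) = Z(G)`.
-/

open Finset

/-- Marginal gain of adding `q` to `S`: `ρ_q(S) = Z(S ∪ {q}) − Z(S)`. -/
def marg {α : Type*} [DecidableEq α] (Z : Finset α → ℝ) (q : α) (S : Finset α) : ℝ :=
  Z (insert q S) - Z S

/-- The set `{g 1, …, g i}` of the first `i` elements of the sequence `g`. -/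
def initSeg {α : Type*} [DecidableEq α] (g : ℕ → α) (i : ℕ) : Finset α :=
  (Finset.Icc 1 i).image g

section initSeg

variable {α : Type*} [DecidableEq α] (g : ℕ → α)

@[simp]
lemma initSeg_zero : initSeg g 0 = ∅ := by
  simp [initSeg]

lemma initSeg_succ (i : ℕ) : initSeg g (i + 1) = insert (g (i + 1)) (initSeg g i) := by
  rw [initSeg, initSeg, ← Finset.insert_Icc_right_eq_Icc_add_one (by omega), image_insert]

lemma initSeg_mono {i j : ℕ} (h : i ≤ j) : initSeg g i ⊆ initSeg g j :=
  image_subset_image (Icc_subset_Icc_right h)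

lemma card_initSeg_le (i : ℕ) : #(initSeg g i) ≤ i :=
  card_image_le.trans (by simp)

lemma card_initSeg {K : ℕ} (hg : Set.InjOn g (Set.Icc 1 K)) : #(initSeg g K) = K := by
  rw [initSeg, card_image_of_injOn (by rwa [coe_Icc]), Nat.card_Icc, Nat.add_sub_cancel]

lemma sum_marg_initSeg (Z : Finset α → ℝ) (K : ℕ) :
    ∑ i ∈ Icc 1 K, marg Z (g i) (initSeg g (i - 1)) = Z (initSeg g K) - Z ∅ := by
  induction K with
  | zero => simp
  | succ K ih =>
    rw [sum_Icc_succ_top (by omega), ih, Nat.add_sub_cancel, marg, ← initSeg_succ]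
    ring

end initSeg

lemma exists_injOn_mem_Icc_of_card_filter_le {β : Type*} (T : Finset β) (h : β → ℕ)
    (hT : ∀ m, #(T.filter (h · ≤ m)) ≤ m) :
    ∃ f : β → ℕ, Set.InjOn f T ∧ ∀ q ∈ T, f q ∈ Icc 1 (h q) := by
  classical
  have hall : ∀ s : Finset T, #s ≤ #(s.biUnion fun q => Icc 1 (h q)) := by
    intro s
    rcases s.eq_empty_or_nonempty with rfl | hs
    · simp
    obtain ⟨q₀, hq₀, hmax⟩ := s.exists_max_image (fun q => h q) hs
    calc #s ≤ #(T.filter (h · ≤ h q₀)) :=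
          card_le_card_of_injOn Subtype.val (fun q hq => mem_filter.2 ⟨q.2, hmax q hq⟩)
            Subtype.val_injective.injOn
      _ ≤ #(Icc 1 (h q₀)) := by simpa using hT (h q₀)
      _ ≤ _ := card_le_card (subset_biUnion_of_mem (fun q : T => Icc 1 (h q)) hq₀)
  obtain ⟨f, hf_inj, hf_mem⟩ := (all_card_le_biUnion_card_iff_exists_injective _).mp hall
  refine ⟨fun q => if hq : q ∈ T then f ⟨q, hq⟩ else 0, fun q hq q' hq' hqq' => ?_,
    fun q hq => by simpa [hq] using hf_mem ⟨q, hq⟩⟩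
  simp only [mem_coe] at hq hq'
  simp only [hq, hq', dite_true] at hqq'
  exact congrArg Subtype.val (hf_inj hqq')

section Matroid

variable {α : Type*} [DecidableEq α] {M : Finset α → Prop}

lemma card_filter_not_indep_insert_le
    (hM_down : ∀ S T : Finset α, M T → S ⊆ T → M S)
    (hM_aug : ∀ S T : Finset α, M S → M T → S.card < T.card → ∃ x ∈ T \ S, M (insert x S))
    [DecidablePred M] {I Ω : Finset α} (hI : M I) (hΩ : M Ω) :
    #(Ω.filter fun q => ¬ M (insert q I)) ≤ #I := by
  by_contra! hlt
  obtain ⟨x, hx, hxI⟩ := hM_aug _ _ hI (hM_down _ _ hΩ (filter_subset _ _)) hlt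
  exact (mem_filter.mp (mem_sdiff.mp hx).1).2 hxI

lemma exists_injOn_indep_insert_initSeg
    (hM_down : ∀ S T : Finset α, M T → S ⊆ T → M S)
    (hM_aug : ∀ S T : Finset α, M S → M T → S.card < T.card → ∃ x ∈ T \ S, M (insert x S))
    {K : ℕ} (hK_le : ∀ S, M S → S.card ≤ K) {g : ℕ → α}
    (hG_card : #(initSeg g K) = K) (hG_M : M (initSeg g K)) {Ω : Finset α} (hΩ : M Ω) :
    ∃ f : α → ℕ, Set.InjOn f ↑(Ω \ initSeg g K) ∧ ∀ q ∈ Ω \ initSeg g K,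
      f q ∈ Icc 1 K ∧ M (insert q (initSeg g (f q - 1))) := by
  classical
  have hex (q : α) : ∃ k, K ≤ k ∨ ¬ M (insert q (initSeg g k)) := ⟨K, .inl le_rfl⟩
  -- `h q` is the first prefix on which `q` depends, capped at `K` so that it always exists.
  let h q := Nat.find (hex q)
  have h_le_K q : h q ≤ K := Nat.find_min' _ (.inl le_rfl)
  have h_indep q : ∀ j < h q, M (insert q (initSeg g j)) := fun j hj =>
    not_not.mp fun hdep => Nat.find_min (hex q) hj (.inr hdep)
  have h_dep : ∀ q ∈ Ω \ initSeg g K, ∀ m ≤ K, h q ≤ m → ¬ M (insert q (initSeg g m)) := by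
    intro q hq m hmK hqm hm
    have hdep : ¬ M (insert q (initSeg g (h q))) := by
      rcases Nat.find_spec (hex q) with hK | hdep
      · intro hM
        have := hK_le _ hM
        rw [show h q = K from (h_le_K q).antisymm hK, card_insert_of_notMem (mem_sdiff.mp hq).2,
          hG_card] at this
        omega
      · exact hdep
    exact hdep (hM_down _ _ hm (insert_subset_insert _ (initSeg_mono g hqm)))
  have hcount (m : ℕ) : #((Ω \ initSeg g K).filter (h · ≤ m)) ≤ m := by
    calc _ ≤ #(Ω.filter fun q => ¬ M (insert q (initSeg g (min m K)))) := by
          refine card_le_card fun q hq => ?_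
          obtain ⟨hq, hqm⟩ := mem_filter.mp hq
          exact mem_filter.mpr ⟨(mem_sdiff.mp hq).1,
            h_dep q hq _ (min_le_right _ _) (le_min hqm (h_le_K q))⟩
      _ ≤ #(initSeg g (min m K)) := card_filter_not_indep_insert_le hM_down hM_aug
          (hM_down _ _ hG_M (initSeg_mono g (min_le_right _ _))) hΩ
      _ ≤ m := (card_initSeg_le g _).trans (min_le_left _ _)
  obtain ⟨f, hf_inj, hf_mem⟩ := exists_injOn_mem_Icc_of_card_filter_le _ h hcount
  refine ⟨f, hf_inj, fun q hq => ?_⟩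
  obtain ⟨hf1, hfh⟩ := mem_Icc.mp (hf_mem q hq)
  exact ⟨mem_Icc.mpr ⟨hf1, hfh.trans (h_le_K q)⟩, h_indep q _ (by omega)⟩

end Matroid

section Submodular

variable {α : Type*} [DecidableEq α] {N : Finset α} {Z : Finset α → ℝ}

lemma le_add_sum_marg
    (hZ_submod : ∀ S T : Finset α, ∀ x, S ⊆ T → T ⊆ N → x ∈ N → x ∉ T →
      Z (insert x T) - Z T ≤ Z (insert x S) - Z S)
    {G : Finset α} (hG : G ⊆ N) {S : Finset α} (hS : S ⊆ N) (hdisj : Disjoint G S) :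
    Z (G ∪ S) ≤ Z G + ∑ q ∈ S, marg Z q G := by
  induction S using Finset.induction_on with
  | empty => simp
  | @insert a S haS ih =>
    obtain ⟨haN, hSN⟩ := insert_subset_iff.mp hS
    obtain ⟨haG, hdisj⟩ := disjoint_insert_right.mp hdisj
    have hgain : Z (insert a (G ∪ S)) - Z (G ∪ S) ≤ marg Z a G :=
      hZ_submod _ _ a subset_union_left (union_subset hG hSN) haN
        (by simp [haG, haS])
    rw [union_insert, sum_insert haS]
    linarith [ih hSN hdisj]

variable {g : ℕ → α} {K : ℕ}

lemma marg_le_marg_greedy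
    (hZ_submod : ∀ S T : Finset α, ∀ x, S ⊆ T → T ⊆ N → x ∈ N → x ∉ T →
      Z (insert x T) - Z T ≤ Z (insert x S) - Z S)
    {M : Finset α → Prop} (hg_max : ∀ i ∈ Finset.Icc 1 K, ∀ x ∈ N, x ∉ initSeg g (i - 1) →
      M (insert x (initSeg g (i - 1))) →
      marg Z x (initSeg g (i - 1)) ≤ marg Z (g i) (initSeg g (i - 1)))
    (hG : initSeg g K ⊆ N) {q : α} (hqN : q ∈ N) (hqG : q ∉ initSeg g K)
    {i : ℕ} (hi : i ∈ Icc 1 K) (hqi : M (insert q (initSeg g (i - 1)))) :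
    marg Z q (initSeg g K) ≤ marg Z (g i) (initSeg g (i - 1)) := by
  have hsub : initSeg g (i - 1) ⊆ initSeg g K := initSeg_mono g (by simp at hi; omega)
  calc marg Z q (initSeg g K) ≤ marg Z q (initSeg g (i - 1)) :=
        hZ_submod _ _ q hsub hG hqN hqG
    _ ≤ _ := hg_max i hi q hqN (fun h => hqG (hsub h)) hqi

lemma sum_marg_greedy_le
    (hZ_mono : ∀ S T : Finset α, S ⊆ T → T ⊆ N → Z S ≤ Z T) (hZ_empty : Z ∅ = 0)
    (hG : initSeg g K ⊆ N) {I : Finset ℕ} (hI : I ⊆ Icc 1 K) :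
    ∑ i ∈ I, marg Z (g i) (initSeg g (i - 1)) ≤ Z (initSeg g K) := by
  calc _ ≤ ∑ i ∈ Icc 1 K, marg Z (g i) (initSeg g (i - 1)) := by
        refine sum_le_sum_of_subset_of_nonneg hI fun i hi _ => ?_
        obtain ⟨hi1, hiK⟩ := mem_Icc.mp hi
        obtain ⟨j, rfl⟩ : ∃ j, i = j + 1 := ⟨i - 1, by omega⟩
        rw [marg, Nat.add_sub_cancel, ← initSeg_succ, sub_nonneg]
        exact hZ_mono _ _ (initSeg_mono g j.le_succ) ((initSeg_mono g hiK).trans hG)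
    _ = Z (initSeg g K) := by rw [sum_marg_initSeg, hZ_empty, sub_zero]

end Submodular

theorem greedy_half_approx_general {α : Type*} [DecidableEq α]
    (N : Finset α) (M : Finset α → Prop)
    (hM_ground : ∀ S, M S → S ⊆ N)
    (hM_down : ∀ S T : Finset α, M T → S ⊆ T → M S)
    (hM_aug : ∀ S T : Finset α, M S → M T → S.card < T.card → ∃ x ∈ T \ S, M (insert x S))
    (K : ℕ) (hK_le : ∀ S, M S → S.card ≤ K)
    (Z : Finset α → ℝ)
    (hZ_mono : ∀ S T : Finset α, S ⊆ T → T ⊆ N → Z S ≤ Z T)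
    (hZ_submod : ∀ S T : Finset α, ∀ x, S ⊆ T → T ⊆ N → x ∈ N → x ∉ T →
      Z (insert x T) - Z T ≤ Z (insert x S) - Z S)
    (hZ_empty : Z ∅ = 0)
    (g : ℕ → α) (hg_inj : Set.InjOn g (Set.Icc 1 K)) (hG_M : M (initSeg g K))
    (hg_max : ∀ i ∈ Finset.Icc 1 K, ∀ x ∈ N, x ∉ initSeg g (i - 1) →
      M (insert x (initSeg g (i - 1))) →
      marg Z x (initSeg g (i - 1)) ≤ marg Z (g i) (initSeg g (i - 1)))
 :
    ∀ Ω : Finset α, M Ω → Z Ω ≤ 2 * Z (initSeg g K) := by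
  intro Ω hΩ
  set G := initSeg g K
  have hGN : G ⊆ N := hM_ground _ hG_M
  have hΩN : Ω ⊆ N := hM_ground _ hΩ
  obtain ⟨f, hf_inj, hf⟩ := exists_injOn_indep_insert_initSeg hM_down hM_aug hK_le
    (card_initSeg g hg_inj) hG_M hΩ
  have hf_Icc : (Ω \ G).image f ⊆ Icc 1 K := fun i hi => by
    obtain ⟨q, hq, rfl⟩ := mem_image.mp hi
    exact (hf q hq).1
  calc Z Ω ≤ Z (G ∪ (Ω \ G)) :=
        hZ_mono _ _ (by rw [union_sdiff_self_eq_union]; exact subset_union_right)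
          (union_subset hGN (sdiff_subset.trans hΩN))
    _ ≤ Z G + ∑ q ∈ Ω \ G, marg Z q G :=
        le_add_sum_marg hZ_submod hGN (sdiff_subset.trans hΩN) disjoint_sdiff
    _ ≤ Z G + ∑ q ∈ Ω \ G, marg Z (g (f q)) (initSeg g (f q - 1)) := by
        gcongr with q hq
        exact marg_le_marg_greedy hZ_submod hg_max hGN (hΩN (mem_sdiff.mp hq).1)
          (mem_sdiff.mp hq).2 (hf q hq).1 (hf q hq).2
    _ = Z G + ∑ i ∈ (Ω \ G).image f, marg Z (g i) (initSeg g (i - 1)) := by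
        rw [sum_image hf_inj]
    _ ≤ Z G + Z G := by grw [sum_marg_greedy_le hZ_mono hZ_empty hGN hf_Icc]
    _ = 2 * Z G := by ring

/-- The greedy algorithm is a 1/2-approximation for monotone submodular
maximization over a matroid: `Z(Ω) ≤ 2·Z(G)` for every `Ω ∈ 𝓜`. -/
theorem greedy_half_approx {α : Type*} [DecidableEq α]
    (N : Finset α) (M : Finset α → Prop)
    (hM_ground : ∀ S, M S → S ⊆ N) (hM_empty : M ∅)
    (hM_down : ∀ S T : Finset α, M T → S ⊆ T → M S)
    (hM_aug : ∀ S T : Finset α, M S → M T → S.card < T.card → ∃ x ∈ T \ S, M (insert x S))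
    (K : ℕ) (hK_le : ∀ S, M S → S.card ≤ K) (hK_ex : ∃ B, M B ∧ B.card = K)
    (Z : Finset α → ℝ)
    (hZ_mono : ∀ S T : Finset α, S ⊆ T → T ⊆ N → Z S ≤ Z T)
    (hZ_submod : ∀ S T : Finset α, ∀ x, S ⊆ T → T ⊆ N → x ∈ N → x ∉ T →
      Z (insert x T) - Z T ≤ Z (insert x S) - Z S)
    (hZ_empty : Z ∅ = 0)
    (g : ℕ → α) (hg_inj : Set.InjOn g (Set.Icc 1 K)) (hG_M : M (initSeg g K))
    (hg_max : ∀ i ∈ Finset.Icc 1 K, ∀ x ∈ N, x ∉ initSeg g (i - 1) →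
      M (insert x (initSeg g (i - 1))) →
      marg Z x (initSeg g (i - 1)) ≤ marg Z (g i) (initSeg g (i - 1)))
 :
    ∀ Ω : Finset α, M Ω → Z Ω ≤ 2 * Z (initSeg g K) :=
  greedy_half_approx_general N M hM_ground hM_down hM_aug K hK_le Z hZ_mono hZ_submod hZ_empty g
    hg_inj hG_M hg_max
end

section
/- Let U be a finite set of users and R a finite set of n resources with monotone, submodular, normalized valuations Z_u for each u ∈ U. Let (u_1,r_1), …, (u_n,r_n) be a greedy allocation sequence with partial allocations G^i, output G, and increments ρ_i = ρ^{u_i}_{r_i}(G^{i−1}). For each i ∈ {1,…,n} let c_i ∈ [0,1] be a curvature bound for Z_{u_i}, and let d_i ≥ 1 be a real number such that d_i·ρ^{u'}_{r_i}(G^{i−1}) ≤ ρ_i for every user u' ∈ U ∖ {u_i} (so d_i is a lower bound on the discriminant at iteration i). Set Λ = max_{1 ≤ i ≤ n} (c_i + 1/d_i). Then for every full allocation Ω, max(1, Λ)·Z(G) ≥ Z(Ω); equivalently, Z(G)/Z(Ω) ≥ min(1, 1/Λ) whenever Z(Ω) > 0. -/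
open Finset

/-- The set of resources allocated to user `u` by the allocation `S`. -/
def allocOf {β γ : Type*} [DecidableEq β] [DecidableEq γ]
    (S : Finset (β × γ)) (u : β) : Finset γ :=
  (S.filter fun p => p.1 = u).image Prod.snd

/-- Total valuation `Z(S) = Σ_{u ∈ U} Z_u(S_u)`. -/
def totalVal {β γ : Type*} [DecidableEq β] [DecidableEq γ]
    (U : Finset β) (Zu : β → Finset γ → ℝ) (S : Finset (β × γ)) : ℝ :=
  ∑ u ∈ U, Zu u (allocOf S u)

/-- Marginal gain `ρ^u_r(S) = Z_u(S_u ∪ {r}) − Z_u(S_u)`. -/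
def margP {β γ : Type*} [DecidableEq β] [DecidableEq γ]
    (Zu : β → Finset γ → ℝ) (u : β) (r : γ) (S : Finset (β × γ)) : ℝ :=
  Zu u (insert r (allocOf S u)) - Zu u (allocOf S u)

/-- The partial allocation `{(u 1, r 1), …, (u i, r i)}`. -/
def gAlloc {β γ : Type*} [DecidableEq β] [DecidableEq γ]
    (u : ℕ → β) (r : ℕ → γ) (i : ℕ) : Finset (β × γ) :=
  (Finset.Icc 1 i).image fun j => (u j, r j)

/-- A partial allocation: each resource occurs in at most one pair. -/
def IsPartialAlloc {β γ : Type*} (U : Finset β) (R : Finset γ) (S : Finset (β × γ)) : Prop :=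
  (∀ p ∈ S, p.1 ∈ U ∧ p.2 ∈ R) ∧ ∀ p ∈ S, ∀ q ∈ S, p.2 = q.2 → p = q

/-- A full allocation: every resource occurs in exactly one pair. -/
def IsFullAlloc {β γ : Type*} (U : Finset β) (R : Finset γ) (S : Finset (β × γ)) : Prop :=
  IsPartialAlloc U R S ∧ ∀ r ∈ R, ∃ u, (u, r) ∈ S

/-!
Compare a full allocation `Ω` with the greedy output `G` user by user. For a user `v`,
submodularity bounds `Z_v(Ω_v)` by `Z_v(G_v)` plus the marginals over `G_v` of the resources `v`
gets in `Ω` but not in `G`, minus what the curvature guarantees for the resources `v` gets in `G`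
but not in `Ω`. A resource `r_i` that changes hands is thus counted at most `ρ_i / d_i` on the
`Ω` side (its marginal at `G^{i-1}` for a user other than `u_i`) and at least `(1 - c_i) ρ_i` on
the `G` side, so summing over users gives `Z(Ω) ≤ Z(G) + Σ_i (c_i + 1/d_i - 1) ρ_i`, and
`Z(G) = Σ_i ρ_i` telescopes.
-/

section Submodular

variable {γ : Type*} [DecidableEq γ]

def SubmodularOn (R : Finset γ) (f : Finset γ → ℝ) : Prop :=
  ∀ S T : Finset γ, ∀ x, S ⊆ T → T ⊆ R → x ∈ R → x ∉ T →
    f (insert x T) - f T ≤ f (insert x S) - f S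

variable {R : Finset γ} {f : Finset γ → ℝ}

theorem SubmodularOn.union_le_add_sum_marginal (hf : SubmodularOn R f) {B C : Finset γ}
    (hB : B ⊆ R) (hC : C ⊆ R) (hCB : Disjoint C B) :
    f (B ∪ C) ≤ f B + ∑ x ∈ C, (f (insert x B) - f B) := by
  induction C using Finset.induction_on with
  | empty => simp
  | insert a s ha ih =>
    rw [insert_subset_iff] at hC
    rw [disjoint_insert_left] at hCB
    have haBs : a ∉ B ∪ s := by simp [hCB.1, ha]
    have hstep := hf B (B ∪ s) a subset_union_left (union_subset hB hC.2) hC.1 haBs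
    rw [union_insert, sum_insert ha]
    linarith [ih hC.2 hCB.2]

theorem add_sum_le_union_of_le_marginal {g : γ → ℝ} {A C : Finset γ} (hA : A ⊆ R) (hC : C ⊆ R)
    (hCA : Disjoint C A)
    (hg : ∀ x ∈ C, ∀ S ⊆ R, x ∉ S → g x ≤ f (insert x S) - f S) :
    f A + ∑ x ∈ C, g x ≤ f (A ∪ C) := by
  induction C using Finset.induction_on with
  | empty => simp
  | insert a s ha ih =>
    rw [insert_subset_iff] at hC
    rw [disjoint_insert_left] at hCA
    have haAs : a ∉ A ∪ s := by simp [hCA.1, ha]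
    have hga := hg a (mem_insert_self a s) (A ∪ s) (union_subset hA hC.2) haAs
    rw [union_insert, sum_insert ha]
    linarith [ih hC.2 hCA.2 fun x hx => hg x (mem_insert_of_mem hx)]

theorem SubmodularOn.add_sum_le_add_sum_marginal (hf : SubmodularOn R f) {O G : Finset γ}
    (hO : O ⊆ R) (hG : G ⊆ R) {g : γ → ℝ}
    (hg : ∀ x ∈ G \ O, ∀ S ⊆ R, x ∉ S → g x ≤ f (insert x S) - f S) :
    f O + ∑ x ∈ G \ O, g x ≤ f G + ∑ x ∈ O \ G, (f (insert x G) - f G) := by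
  calc f O + ∑ x ∈ G \ O, g x
      ≤ f (O ∪ G \ O) := add_sum_le_union_of_le_marginal hO (sdiff_subset.trans hG)
          sdiff_disjoint hg
    _ = f (G ∪ O \ G) := by rw [union_sdiff_self_eq_union, union_sdiff_self_eq_union, union_comm]
    _ ≤ f G + ∑ x ∈ O \ G, (f (insert x G) - f G) :=
        hf.union_le_add_sum_marginal hG (sdiff_subset.trans hO) sdiff_disjoint

end Submodular

/-- The curvature bound is only assumed where `f {x} > 0`; when `f {x} ≤ 0` the hypotheses force
`t = 0`. -/
theorem one_sub_mul_le_marginal_of_curvature {γ : Type*} [DecidableEq γ]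
    {f : Finset γ → ℝ} {S : Finset γ} {x : γ} {c t : ℝ} (hc : c ≤ 1)
    (hmono : f S ≤ f (insert x S))
    (hcurv : 0 < f {x} → (1 - c) * f {x} ≤ f (insert x S) - f S)
    (ht : 0 ≤ t) (htx : t ≤ f {x}) :
    (1 - c) * t ≤ f (insert x S) - f S := by
  rcases lt_or_ge 0 (f {x}) with hx | hx
  · nlinarith [hcurv hx]
  · have : t = 0 := by linarith
    simp [this, hmono]

theorem IsPartialAlloc.mono {β γ : Type*} {U : Finset β} {R : Finset γ} {S T : Finset (β × γ)}
    (hS : IsPartialAlloc U R S) (h : T ⊆ S) : IsPartialAlloc U R T :=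
  ⟨fun p hp => hS.1 p (h hp), fun p hp q hq => hS.2 p (h hp) q (h hq)⟩

section Allocation

variable {β γ : Type*} [DecidableEq β] [DecidableEq γ]
  {U : Finset β} {R : Finset γ} {Zu : β → Finset γ → ℝ} {S T : Finset (β × γ)}

theorem mem_allocOf {v : β} {x : γ} : x ∈ allocOf S v ↔ (v, x) ∈ S := by
  simp [allocOf]

theorem allocOf_mono (h : S ⊆ T) (v : β) : allocOf S v ⊆ allocOf T v :=
  fun _ hx => mem_allocOf.2 (h (mem_allocOf.1 hx))

theorem allocOf_sdiff (v : β) : allocOf (S \ T) v = allocOf S v \ allocOf T v := by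
  ext x
  simp [mem_allocOf]

theorem allocOf_insert (w v : β) (y : γ) :
    allocOf (insert (w, y) S) v = if w = v then insert y (allocOf S v) else allocOf S v := by
  by_cases h : w = v <;> simp [allocOf, filter_insert, h]

theorem IsPartialAlloc.allocOf_subset (hS : IsPartialAlloc U R S) (v : β) : allocOf S v ⊆ R :=
  fun _ hx => (hS.1 _ (mem_allocOf.1 hx)).2

theorem IsPartialAlloc.sum_sum_allocOf (hS : IsPartialAlloc U R S) (h : γ → ℝ) :
    ∑ v ∈ U, ∑ x ∈ allocOf S v, h x = ∑ x ∈ S.image Prod.snd, h x := by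
  have hfiber : ∀ v, ∑ x ∈ allocOf S v, h x = ∑ p ∈ S with p.1 = v, h p.2 := fun v =>
    sum_image fun p hp q hq hpq => Prod.ext ((mem_filter.1 hp).2.trans (mem_filter.1 hq).2.symm) hpq
  rw [sum_congr rfl fun v _ => hfiber v, sum_fiberwise_of_maps_to fun p hp => (hS.1 p hp).1,
    sum_image fun p hp q hq => hS.2 p hp q hq]

theorem IsPartialAlloc.image_snd_sdiff_subset (hS : IsPartialAlloc U R S)
    (hT : ∀ x ∈ R, ∃ w, (w, x) ∈ T) :
    (S \ T).image Prod.snd ⊆ (T \ S).image Prod.snd := by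
  intro x hx
  obtain ⟨⟨v, x⟩, hp, rfl⟩ := mem_image.1 hx
  obtain ⟨hpS, hpT⟩ := mem_sdiff.1 hp
  obtain ⟨w, hw⟩ := hT x (hS.1 _ hpS).2
  refine mem_image.2 ⟨(w, x), mem_sdiff.2 ⟨hw, fun hwS => hpT ?_⟩, rfl⟩
  rwa [hS.2 _ hpS _ hwS rfl]

theorem totalVal_empty (hzero : ∀ v ∈ U, Zu v ∅ = 0) : totalVal U Zu ∅ = 0 :=
  sum_eq_zero fun v hv => by simpa [allocOf] using hzero v hv

theorem totalVal_insert {w : β} (hw : w ∈ U) (y : γ) :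
    totalVal U Zu (insert (w, y) S) = totalVal U Zu S + margP Zu w y S := by
  have hv : ∀ v ∈ U, Zu v (allocOf (insert (w, y) S) v)
      = Zu v (allocOf S v) + if w = v then margP Zu w y S else 0 := by
    intro v _
    rw [allocOf_insert]
    split_ifs with h
    · subst h; simp [margP]
    · simp
  rw [totalVal, sum_congr rfl hv, sum_add_distrib, sum_ite_eq, if_pos hw, totalVal]

/-- The resources that `Ω` gives to another user than `G` does are the same whether read off
`Ω \ G` or `G \ Ω`. -/
theorem IsFullAlloc.totalVal_add_sum_le {Ω G : Finset (β × γ)} (hΩ : IsFullAlloc U R Ω)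
    (hG : IsFullAlloc U R G) {a g : γ → ℝ}
    (hUser : ∀ v ∈ U, Zu v (allocOf Ω v) + ∑ x ∈ allocOf G v \ allocOf Ω v, g x
      ≤ Zu v (allocOf G v) + ∑ x ∈ allocOf Ω v \ allocOf G v, a x) :
    totalVal U Zu Ω + ∑ x ∈ (Ω \ G).image Prod.snd, g x
      ≤ totalVal U Zu G + ∑ x ∈ (Ω \ G).image Prod.snd, a x := by
  have hD : (G \ Ω).image Prod.snd = (Ω \ G).image Prod.snd :=
    subset_antisymm (hG.1.image_snd_sdiff_subset hΩ.2) (hΩ.1.image_snd_sdiff_subset hG.2)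
  have hsum := sum_le_sum hUser
  simp only [sum_add_distrib, ← allocOf_sdiff] at hsum
  rwa [(hΩ.1.mono sdiff_subset).sum_sum_allocOf, (hG.1.mono sdiff_subset).sum_sum_allocOf,
    hD] at hsum

theorem margP_nonneg {v : β} {x : γ}
    (hmono : ∀ S T : Finset γ, S ⊆ T → T ⊆ R → Zu v S ≤ Zu v T)
    (hS : allocOf S v ⊆ R) (hx : x ∈ R) : 0 ≤ margP Zu v x S :=
  sub_nonneg.2 (hmono _ _ (subset_insert _ _) (insert_subset hx hS))

theorem margP_le_singleton {v : β} {x : γ} (hsub : SubmodularOn R (Zu v)) (hzero : Zu v ∅ = 0)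
    (hS : allocOf S v ⊆ R) (hx : x ∈ R) (hxS : x ∉ allocOf S v) :
    margP Zu v x S ≤ Zu v {x} := by
  simpa [margP, hzero] using hsub ∅ _ x (empty_subset _) hS hx hxS

end Allocation

section Greedy

variable {β γ : Type*} [DecidableEq β] [DecidableEq γ]
  {U : Finset β} {R : Finset γ} {Zu : β → Finset γ → ℝ} {u : ℕ → β} {r : ℕ → γ} {n : ℕ}

theorem mem_gAlloc {k : ℕ} {p : β × γ} :
    p ∈ gAlloc u r k ↔ ∃ j ∈ Icc 1 k, (u j, r j) = p := by
  simp [gAlloc]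

theorem mk_mem_gAlloc {i k : ℕ} (hi : i ∈ Icc 1 k) : (u i, r i) ∈ gAlloc u r k :=
  mem_gAlloc.2 ⟨i, hi, rfl⟩

theorem gAlloc_succ (k : ℕ) :
    gAlloc u r (k + 1) = insert (u (k + 1), r (k + 1)) (gAlloc u r k) := by
  rw [gAlloc, ← insert_Icc_right_eq_Icc_add_one (by omega), image_insert, gAlloc]

theorem gAlloc_mono {k k' : ℕ} (h : k ≤ k') : gAlloc u r k ⊆ gAlloc u r k' :=
  image_subset_image (Icc_subset_Icc_right h)

theorem gAlloc_pred_subset {i : ℕ} (hi : i ∈ Icc 1 n) : gAlloc u r (i - 1) ⊆ gAlloc u r n :=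
  gAlloc_mono ((i.sub_le 1).trans (mem_Icc.1 hi).2)

theorem isFullAlloc_gAlloc (hu_mem : ∀ i ∈ Icc 1 n, u i ∈ U)
    (hr_inj : Set.InjOn r (Set.Icc 1 n)) (hr_img : (Icc 1 n).image r = R) :
    IsFullAlloc U R (gAlloc u r n) := by
  refine ⟨⟨?_, ?_⟩, fun x hx => ?_⟩
  · rintro _ hp
    obtain ⟨i, hi, rfl⟩ := mem_gAlloc.1 hp
    exact ⟨hu_mem i hi, hr_img ▸ mem_image_of_mem r hi⟩
  · rintro _ hp _ hq hpq
    obtain ⟨i, hi, rfl⟩ := mem_gAlloc.1 hp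
    obtain ⟨j, hj, rfl⟩ := mem_gAlloc.1 hq
    rw [hr_inj (coe_Icc 1 n ▸ hi) (coe_Icc 1 n ▸ hj) hpq]
  · obtain ⟨i, hi, rfl⟩ := mem_image.1 (hr_img ▸ hx)
    exact ⟨u i, mk_mem_gAlloc hi⟩

theorem notMem_allocOf_gAlloc_pred (hr_inj : Set.InjOn r (Set.Icc 1 n)) {i : ℕ}
    (hi : i ∈ Icc 1 n) (v : β) : r i ∉ allocOf (gAlloc u r (i - 1)) v := by
  intro h
  obtain ⟨j, hj, hji⟩ := mem_gAlloc.1 (mem_allocOf.1 h)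
  have hj' := mem_Icc.1 hj
  have hi' := mem_Icc.1 hi
  have : j = i :=
    hr_inj (Set.mem_Icc.2 ⟨hj'.1, by omega⟩) (Set.mem_Icc.2 hi') (Prod.mk.inj hji).2
  omega

/-- The gain `ρ_i` of the `i`-th greedy step. -/
def greedyGain (Zu : β → Finset γ → ℝ) (u : ℕ → β) (r : ℕ → γ) (i : ℕ) : ℝ :=
  margP Zu (u i) (r i) (gAlloc u r (i - 1))

theorem totalVal_gAlloc (hzero : ∀ v ∈ U, Zu v ∅ = 0) {k : ℕ}
    (hu_mem : ∀ i ∈ Icc 1 k, u i ∈ U) :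
    totalVal U Zu (gAlloc u r k) = ∑ i ∈ Icc 1 k, greedyGain Zu u r i := by
  induction k with
  | zero => simpa [gAlloc] using totalVal_empty hzero
  | succ k ih =>
    rw [gAlloc_succ, totalVal_insert (hu_mem _ (by simp)), ih fun i hi => hu_mem i
      (Icc_subset_Icc_right k.le_succ hi), ← insert_Icc_right_eq_Icc_add_one (by omega),
      sum_insert (by simp)]
    simp [greedyGain, add_comm]

theorem greedyGain_nonneg (hmono : ∀ v ∈ U, ∀ S T : Finset γ, S ⊆ T → T ⊆ R → Zu v S ≤ Zu v T)
    (hG : IsPartialAlloc U R (gAlloc u r n)) {i : ℕ} (hi : i ∈ Icc 1 n) :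
    0 ≤ greedyGain Zu u r i :=
  have hmem := hG.1 _ (mk_mem_gAlloc hi)
  margP_nonneg (hmono _ hmem.1) ((hG.mono (gAlloc_pred_subset hi)).allocOf_subset _)
    hmem.2

theorem greedyGain_le_singleton (hsubmod : ∀ v ∈ U, SubmodularOn R (Zu v))
    (hzero : ∀ v ∈ U, Zu v ∅ = 0) (hG : IsPartialAlloc U R (gAlloc u r n))
    (hr_inj : Set.InjOn r (Set.Icc 1 n)) {i : ℕ} (hi : i ∈ Icc 1 n) :
    greedyGain Zu u r i ≤ Zu (u i) {r i} :=
  have hmem := hG.1 _ (mk_mem_gAlloc hi)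
  margP_le_singleton (hsubmod _ hmem.1) (hzero _ hmem.1)
    ((hG.mono (gAlloc_pred_subset hi)).allocOf_subset _) hmem.2
    (notMem_allocOf_gAlloc_pred hr_inj hi _)

/-- Transports a weight `w i` on greedy steps to the resource `r i`; the sum over the fibre avoids
choosing an inverse of `r`. -/
def resourceWeight (r : ℕ → γ) (n : ℕ) (w : ℕ → ℝ) (x : γ) : ℝ :=
  ∑ i ∈ Icc 1 n with r i = x, w i

theorem resourceWeight_apply (hr_inj : Set.InjOn r (Set.Icc 1 n)) {i : ℕ} (hi : i ∈ Icc 1 n)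
    (w : ℕ → ℝ) : resourceWeight r n w (r i) = w i := by
  have hfiber : {j ∈ Icc 1 n | r j = r i} = {i} := by
    ext j
    simp only [mem_filter, mem_singleton]
    constructor
    · rintro ⟨hj, hji⟩
      exact hr_inj (coe_Icc 1 n ▸ hj) (coe_Icc 1 n ▸ hi) hji
    · rintro rfl
      exact ⟨hi, rfl⟩
  rw [resourceWeight, hfiber, sum_singleton]

theorem sum_resourceWeight (w : ℕ → ℝ) (D : Finset γ) :
    ∑ x ∈ D, resourceWeight r n w x = ∑ i ∈ Icc 1 n with r i ∈ D, w i :=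
  sum_fiberwise_eq_sum_filter _ _ _ _

theorem sum_resourceWeight_sub_le {ρ c d : ℕ → ℝ} {Λ : ℝ} (hρ : ∀ i ∈ Icc 1 n, 0 ≤ ρ i)
    (hΛ : ∀ i ∈ Icc 1 n, c i + 1 / d i ≤ Λ) (D : Finset γ) :
    ∑ x ∈ D, resourceWeight r n (fun i => ρ i / d i) x
        - ∑ x ∈ D, resourceWeight r n (fun i => (1 - c i) * ρ i) x
      ≤ (max 1 Λ - 1) * ∑ i ∈ Icc 1 n, ρ i := by
  rw [sum_resourceWeight, sum_resourceWeight, ← sum_sub_distrib, mul_sum]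
  calc ∑ i ∈ Icc 1 n with r i ∈ D, (ρ i / d i - (1 - c i) * ρ i)
      ≤ ∑ i ∈ Icc 1 n with r i ∈ D, (max 1 Λ - 1) * ρ i := by
        refine sum_le_sum fun i hi => ?_
        have hi' := (mem_filter.1 hi).1
        have hΛi := (hΛ i hi').trans (le_max_right 1 Λ)
        calc ρ i / d i - (1 - c i) * ρ i = (c i + 1 / d i - 1) * ρ i := by ring
          _ ≤ (max 1 Λ - 1) * ρ i := mul_le_mul_of_nonneg_right (by linarith) (hρ i hi')
    _ ≤ ∑ i ∈ Icc 1 n, (max 1 Λ - 1) * ρ i :=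
        sum_le_sum_of_subset_of_nonneg (filter_subset _ _) fun i hi _ =>
          mul_nonneg (by linarith [le_max_left 1 Λ]) (hρ i hi)

theorem resourceWeight_le_marginal_of_curvature
    (hmono : ∀ v ∈ U, ∀ S T : Finset γ, S ⊆ T → T ⊆ R → Zu v S ≤ Zu v T)
    (hsubmod : ∀ v ∈ U, SubmodularOn R (Zu v)) (hzero : ∀ v ∈ U, Zu v ∅ = 0)
    (hG : IsPartialAlloc U R (gAlloc u r n)) (hr_inj : Set.InjOn r (Set.Icc 1 n))
    {c : ℕ → ℝ} (hc : ∀ i ∈ Icc 1 n, c i ≤ 1)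
    (hcurv : ∀ i ∈ Icc 1 n, ∀ S ⊆ R, ∀ x ∈ R, x ∉ S → 0 < Zu (u i) {x} →
      (1 - c i) * Zu (u i) {x} ≤ Zu (u i) (insert x S) - Zu (u i) S)
    {v : β} {x : γ} (hx : x ∈ allocOf (gAlloc u r n) v) {S : Finset γ} (hS : S ⊆ R)
    (hxS : x ∉ S) :
    resourceWeight r n (fun i => (1 - c i) * greedyGain Zu u r i) x
      ≤ Zu v (insert x S) - Zu v S := by
  obtain ⟨i, hi, hp⟩ := mem_gAlloc.1 (mem_allocOf.1 hx)
  obtain ⟨rfl, rfl⟩ := Prod.mk.inj hp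
  have hmem := hG.1 _ (mk_mem_gAlloc hi)
  rw [resourceWeight_apply hr_inj hi]
  exact one_sub_mul_le_marginal_of_curvature (hc i hi)
    (hmono _ hmem.1 _ _ (subset_insert _ _) (insert_subset hmem.2 hS))
    (hcurv i hi S hS _ hmem.2 hxS) (greedyGain_nonneg hmono hG hi)
    (greedyGain_le_singleton hsubmod hzero hG hr_inj hi)

theorem marginal_le_resourceWeight_of_discriminant (hsubmod : ∀ v ∈ U, SubmodularOn R (Zu v))
    (hG : IsPartialAlloc U R (gAlloc u r n)) (hr_inj : Set.InjOn r (Set.Icc 1 n))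
    (hr_img : (Icc 1 n).image r = R) {d : ℕ → ℝ} (hd : ∀ i ∈ Icc 1 n, 1 ≤ d i)
    (hdisc : ∀ i ∈ Icc 1 n, ∀ u' ∈ U, u' ≠ u i →
      d i * margP Zu u' (r i) (gAlloc u r (i - 1)) ≤ greedyGain Zu u r i)
    {v : β} (hv : v ∈ U) {x : γ} (hx : x ∈ R) (hxG : x ∉ allocOf (gAlloc u r n) v) :
    Zu v (insert x (allocOf (gAlloc u r n) v)) - Zu v (allocOf (gAlloc u r n) v)
      ≤ resourceWeight r n (fun i => greedyGain Zu u r i / d i) x := by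
  obtain ⟨i, hi, rfl⟩ := mem_image.1 (hr_img ▸ hx)
  have hvi : v ≠ u i := by
    rintro rfl
    exact hxG (mem_allocOf.2 (mk_mem_gAlloc hi))
  have hd0 : 0 < d i := by linarith [hd i hi]
  have hlater := hsubmod v hv _ _ (r i) (allocOf_mono (gAlloc_pred_subset hi) v)
    (hG.allocOf_subset v) hx hxG
  rw [resourceWeight_apply hr_inj hi, le_div_iff₀ hd0]
  calc (Zu v (insert (r i) (allocOf (gAlloc u r n) v)) - Zu v (allocOf (gAlloc u r n) v)) * d i
      ≤ d i * margP Zu v (r i) (gAlloc u r (i - 1)) := by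
        rw [mul_comm]; exact mul_le_mul_of_nonneg_left hlater hd0.le
    _ ≤ greedyGain Zu u r i := hdisc i hi v hv hvi

end Greedy

theorem greedy_partition_discriminant_approx_general {β γ : Type*} [DecidableEq β] [DecidableEq γ]
    (U : Finset β) (R : Finset γ) (n : ℕ)
    (Zu : β → Finset γ → ℝ)
    (hmono : ∀ u ∈ U, ∀ S T : Finset γ, S ⊆ T → T ⊆ R → Zu u S ≤ Zu u T)
    (hsubmod : ∀ u ∈ U, ∀ S T : Finset γ, ∀ x, S ⊆ T → T ⊆ R → x ∈ R → x ∉ T →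
      Zu u (insert x T) - Zu u T ≤ Zu u (insert x S) - Zu u S)
    (hzero : ∀ u ∈ U, Zu u (∅ : Finset γ) = 0)
    (u : ℕ → β) (r : ℕ → γ)
    (hu_mem : ∀ i ∈ Finset.Icc 1 n, u i ∈ U)
    (hr_inj : Set.InjOn r (Set.Icc 1 n)) (hr_img : (Finset.Icc 1 n).image r = R)
    (c : ℕ → ℝ) (hc : ∀ i ∈ Finset.Icc 1 n, 0 ≤ c i ∧ c i ≤ 1)
    (hcurv : ∀ i ∈ Finset.Icc 1 n, ∀ S ⊆ R, ∀ x ∈ R, x ∉ S → 0 < Zu (u i) {x} →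
      (1 - c i) * Zu (u i) {x} ≤ Zu (u i) (insert x S) - Zu (u i) S)
    (d : ℕ → ℝ) (hd : ∀ i ∈ Finset.Icc 1 n, 1 ≤ d i)
    (hdisc : ∀ i ∈ Finset.Icc 1 n, ∀ u' ∈ U, u' ≠ u i →
      d i * margP Zu u' (r i) (gAlloc u r (i - 1)) ≤
        margP Zu (u i) (r i) (gAlloc u r (i - 1)))
    (Λ : ℝ) (hΛ : ∀ i ∈ Finset.Icc 1 n, c i + 1 / d i ≤ Λ)
 :
    ∀ Ω : Finset (β × γ), IsFullAlloc U R Ω →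
      totalVal U Zu Ω ≤ max 1 Λ * totalVal U Zu (gAlloc u r n) := by
  intro Ω hΩ
  have hG := isFullAlloc_gAlloc hu_mem hr_inj hr_img
  have hUser : ∀ v ∈ U, Zu v (allocOf Ω v) + ∑ x ∈ allocOf (gAlloc u r n) v \ allocOf Ω v,
        resourceWeight r n (fun i => (1 - c i) * greedyGain Zu u r i) x
      ≤ Zu v (allocOf (gAlloc u r n) v) + ∑ x ∈ allocOf Ω v \ allocOf (gAlloc u r n) v,
        resourceWeight r n (fun i => greedyGain Zu u r i / d i) x := fun v hv =>
    (SubmodularOn.add_sum_le_add_sum_marginal (hsubmod v hv) (hΩ.1.allocOf_subset v)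
      (hG.1.allocOf_subset v) fun x hx _ hS hxS =>
        resourceWeight_le_marginal_of_curvature hmono hsubmod hzero hG.1 hr_inj
          (fun i hi => (hc i hi).2) hcurv (mem_sdiff.1 hx).1 hS hxS).trans
    (add_le_add le_rfl (sum_le_sum fun x hx => marginal_le_resourceWeight_of_discriminant
      hsubmod hG.1 hr_inj hr_img hd hdisc hv (hΩ.1.allocOf_subset v (mem_sdiff.1 hx).1)
      (mem_sdiff.1 hx).2))
  have hExchange := hΩ.totalVal_add_sum_le hG hUser
  have hWeights := sum_resourceWeight_sub_le (r := r)
    (fun i hi => greedyGain_nonneg hmono hG.1 hi) hΛ ((Ω \ gAlloc u r n).image Prod.snd)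
  rw [totalVal_gAlloc hzero hu_mem] at hExchange ⊢
  linarith

/-- Discriminant-and-curvature guarantee for the greedy algorithm on the
submodular partition problem: `Z(Ω) ≤ max(1, Λ)·Z(G)` where `Λ ≥ c_i + 1/d_i` for all `i`. -/
theorem greedy_partition_discriminant_approx {β γ : Type*} [DecidableEq β] [DecidableEq γ]
    (U : Finset β) (R : Finset γ) (n : ℕ) (hn : R.card = n)
    (Zu : β → Finset γ → ℝ)
    (hmono : ∀ u ∈ U, ∀ S T : Finset γ, S ⊆ T → T ⊆ R → Zu u S ≤ Zu u T)
    (hsubmod : ∀ u ∈ U, ∀ S T : Finset γ, ∀ x, S ⊆ T → T ⊆ R → x ∈ R → x ∉ T →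
      Zu u (insert x T) - Zu u T ≤ Zu u (insert x S) - Zu u S)
    (hzero : ∀ u ∈ U, Zu u (∅ : Finset γ) = 0)
    (u : ℕ → β) (r : ℕ → γ)
    (hu_mem : ∀ i ∈ Finset.Icc 1 n, u i ∈ U)
    (hr_inj : Set.InjOn r (Set.Icc 1 n)) (hr_img : (Finset.Icc 1 n).image r = R)
    (hgreedy : ∀ i ∈ Finset.Icc 1 n, ∀ u' ∈ U, ∀ r' ∈ R,
      r' ∉ (Finset.Icc 1 (i - 1)).image r →
      margP Zu u' r' (gAlloc u r (i - 1)) ≤ margP Zu (u i) (r i) (gAlloc u r (i - 1)))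
    (c : ℕ → ℝ) (hc : ∀ i ∈ Finset.Icc 1 n, 0 ≤ c i ∧ c i ≤ 1)
    (hcurv : ∀ i ∈ Finset.Icc 1 n, ∀ S ⊆ R, ∀ x ∈ R, x ∉ S → 0 < Zu (u i) {x} →
      (1 - c i) * Zu (u i) {x} ≤ Zu (u i) (insert x S) - Zu (u i) S)
    (d : ℕ → ℝ) (hd : ∀ i ∈ Finset.Icc 1 n, 1 ≤ d i)
    (hdisc : ∀ i ∈ Finset.Icc 1 n, ∀ u' ∈ U, u' ≠ u i →
      d i * margP Zu u' (r i) (gAlloc u r (i - 1)) ≤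
        margP Zu (u i) (r i) (gAlloc u r (i - 1)))
    (Λ : ℝ) (hΛ : ∀ i ∈ Finset.Icc 1 n, c i + 1 / d i ≤ Λ)
 :
    ∀ Ω : Finset (β × γ), IsFullAlloc U R Ω →
      totalVal U Zu Ω ≤ max 1 Λ * totalVal U Zu (gAlloc u r n) :=
  greedy_partition_discriminant_approx_general U R n Zu hmono hsubmod hzero u r hu_mem hr_inj hr_img
    c hc hcurv d hd hdisc Λ hΛ
end

section
/- Let N be a finite ground set, (N, 𝓜) a matroid of rank K, Z a monotone, submodular, normalized set function on N, and g a greedy sequence for (Z, 𝓜) with output G, partial outputs G^i, and increments ρ_i = ρ_{g_i}(G^{i−1}). Let Ω be a basis with an enumeration (ω_1, …, ω_K) satisfying, for every i: G^{i−1} ∪ {ω_i} ∈ 𝓜, and ω_i ∈ G ∩ Ω implies ω_i = g_i. For each i let d_i ≥ 1 be a real number such that d_i·ρ_x(G^{i−1}) ≤ ρ_i for every x ∈ N ∖ G^{i−1} with x ≠ g_i and G^{i−1} ∪ {x} ∈ 𝓜. Then for every t ∈ {1, …, K} and every i with ω_i ∈ Ω ∖ G: if i > t then ρ_{ω_i}(G^{t−1})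 ≤ ρ_t, and if 1 ≤ i ≤ t then d_i·ρ_{ω_i}(G^{t−1}) ≤ ρ_i. -/
open Finset

theorem initSeg_mono_s14 {α : Type*} [DecidableEq α] (g : ℕ → α) : Monotone (initSeg g) :=
  fun _ _ hab => image_subset_image (Icc_subset_Icc_right hab)

theorem mem_initSeg_self {α : Type*} [DecidableEq α] (g : ℕ → α) {i : ℕ} (hi : 1 ≤ i) :
    g i ∈ initSeg g i :=
  mem_image_of_mem g (mem_Icc.2 ⟨hi, le_rfl⟩)

/-- An element that can still be added at step `i` could already be added at any earlier
step `t`, so there it gains no more than the greedy choice `g t`. -/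
theorem marg_le_greedy_of_le {α : Type*} [DecidableEq α] {N : Finset α}
    {M : Finset α → Prop} (hM_ground : ∀ S, M S → S ⊆ N)
    (hM_down : ∀ S T : Finset α, M T → S ⊆ T → M S) {K : ℕ} {Z : Finset α → ℝ}
    {g : ℕ → α}
    (hg_max : ∀ i ∈ Finset.Icc 1 K, ∀ x ∈ N, x ∉ initSeg g (i - 1) →
      M (insert x (initSeg g (i - 1))) →
      marg Z x (initSeg g (i - 1)) ≤ marg Z (g i) (initSeg g (i - 1)))
    {t i : ℕ} (ht : t ∈ Icc 1 K) (hti : t ≤ i) {x : α} (hx : x ∉ initSeg g (t - 1))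
    (hfeas : M (insert x (initSeg g (i - 1)))) :
    marg Z x (initSeg g (t - 1)) ≤ marg Z (g t) (initSeg g (t - 1)) := by
  have hfeas_t : M (insert x (initSeg g (t - 1))) :=
    hM_down _ _ hfeas (insert_subset_insert x (initSeg_mono_s14 g (Nat.sub_le_sub_right hti 1)))
  exact hg_max t ht x (hM_ground _ hfeas (mem_insert_self x _)) hx hfeas_t

/-- Submodularity moves the marginal of `x` back from step `t` to step `i`, where the
discrepancy bound `d i` applies. -/
theorem mul_marg_le_greedy_of_le {α : Type*} [DecidableEq α] {N : Finset α}
    {M : Finset α → Prop} (hM_ground : ∀ S, M S → S ⊆ N) {K : ℕ} {Z : Finset α → ℝ}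
    (hZ_submod : ∀ S T : Finset α, ∀ x, S ⊆ T → T ⊆ N → x ∈ N → x ∉ T →
      Z (insert x T) - Z T ≤ Z (insert x S) - Z S)
    {g : ℕ → α} {d : ℕ → ℝ}
    (hdisc : ∀ i ∈ Finset.Icc 1 K, ∀ x ∈ N, x ∉ initSeg g (i - 1) → x ≠ g i →
      M (insert x (initSeg g (i - 1))) →
      d i * marg Z x (initSeg g (i - 1)) ≤ marg Z (g i) (initSeg g (i - 1)))
    {t i : ℕ} (hi : i ∈ Icc 1 K) (hd : 0 ≤ d i) (hit : i ≤ t) (hT : initSeg g (t - 1) ⊆ N)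
    {x : α} (hx : x ∉ initSeg g t) (hfeas : M (insert x (initSeg g (i - 1)))) :
    d i * marg Z x (initSeg g (t - 1)) ≤ marg Z (g i) (initSeg g (i - 1)) := by
  have hi1 : 1 ≤ i := (mem_Icc.1 hi).1
  have hxN : x ∈ N := hM_ground _ hfeas (mem_insert_self x _)
  have hx_t : x ∉ initSeg g (t - 1) := fun h => hx (initSeg_mono_s14 g (Nat.sub_le t 1) h)
  have hx_i : x ∉ initSeg g (i - 1) := fun h => hx (initSeg_mono_s14 g (by omega) h)
  have hx_ne : x ≠ g i := by
    rintro rfl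
    exact hx (initSeg_mono_s14 g hit (mem_initSeg_self g hi1))
  calc d i * marg Z x (initSeg g (t - 1))
      ≤ d i * marg Z x (initSeg g (i - 1)) := by
        gcongr
        exact hZ_submod _ _ x (initSeg_mono_s14 g (by omega)) hT hxN hx_t
    _ ≤ marg Z (g i) (initSeg g (i - 1)) := hdisc i hi x hxN hx_i hx_ne hfeas

theorem greedy_vs_optimal_marginals_general {α : Type*} [DecidableEq α]
    (N : Finset α) (M : Finset α → Prop)
    (hM_ground : ∀ S, M S → S ⊆ N)
    (hM_down : ∀ S T : Finset α, M T → S ⊆ T → M S)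
    (K : ℕ)
    (Z : Finset α → ℝ)
    (hZ_submod : ∀ S T : Finset α, ∀ x, S ⊆ T → T ⊆ N → x ∈ N → x ∉ T →
      Z (insert x T) - Z T ≤ Z (insert x S) - Z S)
    (g : ℕ → α)
    (hg_max : ∀ i ∈ Finset.Icc 1 K, ∀ x ∈ N, x ∉ initSeg g (i - 1) →
      M (insert x (initSeg g (i - 1))) →
      marg Z x (initSeg g (i - 1)) ≤ marg Z (g i) (initSeg g (i - 1)))
    (ω : ℕ → α)
    (hω_feas : ∀ i ∈ Finset.Icc 1 K, M (insert (ω i) (initSeg g (i - 1))))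
    (d : ℕ → ℝ) (hd : ∀ i ∈ Finset.Icc 1 K, 1 ≤ d i)
    (hdisc : ∀ i ∈ Finset.Icc 1 K, ∀ x ∈ N, x ∉ initSeg g (i - 1) → x ≠ g i →
      M (insert x (initSeg g (i - 1))) →
      d i * marg Z x (initSeg g (i - 1)) ≤ marg Z (g i) (initSeg g (i - 1))) :
    ∀ t ∈ Finset.Icc 1 K, ∀ i ∈ Finset.Icc 1 K, ω i ∉ initSeg g K →
      (t < i → marg Z (ω i) (initSeg g (t - 1)) ≤ marg Z (g t) (initSeg g (t - 1))) ∧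
      (i ≤ t → d i * marg Z (ω i) (initSeg g (t - 1)) ≤
        marg Z (g i) (initSeg g (i - 1))) := by
  intro t ht i hi hωG
  have htK : t ≤ K := (mem_Icc.1 ht).2
  have hω_t : ω i ∉ initSeg g t := fun h => hωG (initSeg_mono_s14 g htK h)
  refine ⟨fun hti => ?_, fun hit => ?_⟩
  · exact marg_le_greedy_of_le hM_ground hM_down hg_max ht hti.le
      (fun h => hω_t (initSeg_mono_s14 g (Nat.sub_le t 1) h)) (hω_feas i hi)
  · have hT : initSeg g (t - 1) ⊆ N :=
      (subset_insert (ω t) _).trans (hM_ground _ (hω_feas t ht))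
    exact mul_marg_le_greedy_of_le hM_ground hZ_submod hdisc hi
      (zero_le_one.trans (hd i hi)) hit hT hω_t (hω_feas i hi)

/-- Bounds on marginal values of optimal elements against greedy
increments: for `ω_i ∈ Ω ∖ G`, if `i > t` then `ρ_{ω_i}(G^{t−1}) ≤ ρ_t`, and if `i ≤ t`
then `d_i·ρ_{ω_i}(G^{t−1}) ≤ ρ_i`. -/
theorem greedy_vs_optimal_marginals {α : Type*} [DecidableEq α]
    (N : Finset α) (M : Finset α → Prop)
    (hM_ground : ∀ S, M S → S ⊆ N) (hM_empty : M ∅)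
    (hM_down : ∀ S T : Finset α, M T → S ⊆ T → M S)
    (hM_aug : ∀ S T : Finset α, M S → M T → S.card < T.card → ∃ x ∈ T \ S, M (insert x S))
    (K : ℕ) (hK_le : ∀ S, M S → S.card ≤ K) (hK_ex : ∃ B, M B ∧ B.card = K)
    (Z : Finset α → ℝ)
    (hZ_mono : ∀ S T : Finset α, S ⊆ T → T ⊆ N → Z S ≤ Z T)
    (hZ_submod : ∀ S T : Finset α, ∀ x, S ⊆ T → T ⊆ N → x ∈ N → x ∉ T →
      Z (insert x T) - Z T ≤ Z (insert x S) - Z S)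
    (hZ_empty : Z ∅ = 0)
    (g : ℕ → α) (hg_inj : Set.InjOn g (Set.Icc 1 K)) (hG_M : M (initSeg g K))
    (hg_max : ∀ i ∈ Finset.Icc 1 K, ∀ x ∈ N, x ∉ initSeg g (i - 1) →
      M (insert x (initSeg g (i - 1))) →
      marg Z x (initSeg g (i - 1)) ≤ marg Z (g i) (initSeg g (i - 1)))
    (Ω : Finset α) (hΩ_M : M Ω) (hΩ_card : Ω.card = K)
    (ω : ℕ → α) (hω_inj : Set.InjOn ω (Set.Icc 1 K))
    (hω_img : (Finset.Icc 1 K).image ω = Ω)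
    (hω_feas : ∀ i ∈ Finset.Icc 1 K, M (insert (ω i) (initSeg g (i - 1))))
    (hω_int : ∀ i ∈ Finset.Icc 1 K, ω i ∈ initSeg g K → ω i = g i)
    (d : ℕ → ℝ) (hd : ∀ i ∈ Finset.Icc 1 K, 1 ≤ d i)
    (hdisc : ∀ i ∈ Finset.Icc 1 K, ∀ x ∈ N, x ∉ initSeg g (i - 1) → x ≠ g i →
      M (insert x (initSeg g (i - 1))) →
      d i * marg Z x (initSeg g (i - 1)) ≤ marg Z (g i) (initSeg g (i - 1))) :
    ∀ t ∈ Finset.Icc 1 K, ∀ i ∈ Finset.Icc 1 K, ω i ∉ initSeg g K →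
      (t < i → marg Z (ω i) (initSeg g (t - 1)) ≤ marg Z (g t) (initSeg g (t - 1))) ∧
      (i ≤ t → d i * marg Z (ω i) (initSeg g (t - 1)) ≤
        marg Z (g i) (initSeg g (i - 1))) :=
  greedy_vs_optimal_marginals_general N M hM_ground hM_down K Z hZ_submod g hg_max ω hω_feas d hd
    hdisc
end

section
/- For every c ∈ [0,1), every real d with 1 ≤ d ≤ 1/(1 − c), and every ε > 0, there exist a finite resource set R with |R| = n, a two-element user set U, monotone, submodular, normalized valuations Z_u (u ∈ U) each admitting curvature bound c, a greedy allocation sequence (u_1,r_1), …, (u_n,r_n) with partial allocations G^i, output G, and increments ρ_i whose discriminants are all at least d (i.e., d·ρ^{u'}_{r_i}(G^{i−1}) ≤ ρ_i for every i and every user u' ≠ u_i), and a full allocation Ω with Z(Ω) > 0, such that Z(G) ≤ (1/(c + 1/d) + ε)·Z(Ω). Hence the approximation guarantee min(1, 1/(c + 1/d)) for the greedy algorithm on the submodular partition problem is tight. -/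
/-!
Let `g = d (1 - c) ≤ 1`. Greedy hands item `i` to user `altUser i`, alternating between the two
users, and gains `g ^ i` at step `i`. Each user's valuation groups its items into blocks
`{j, j + 1}`, `j` an item greedy gives to that user, of weight `g ^ j`; an item is worth the full
block weight when it is alone in its block and `1 - c` times it otherwise. Once greedy has given
`i - 1` to one user, that user values `i` at `(1 - c) g ^ (i - 1) = g ^ i / d`, so every
discriminant is exactly `d`. The allocation `Ω` handing every item to the other user leaves each
item alone in its block, collects `g ^ (i - 1)` for item `i ≥ 2` and `1 - c` for item `1`, and
`(c + 1 / d) Z(G) = Z(Ω) + c g ^ n`; the error term is below `ε Z(Ω)` since `Z(Ω) ≥ (n - 1) g ^ n`.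
-/

open Finset

section Allocation

variable {β γ : Type*} [DecidableEq β] [DecidableEq γ]

lemma gAlloc_id (u : ℕ → β) (k : ℕ) : gAlloc u id k = (Icc 1 k).image fun j => (u j, j) := rfl

lemma allocOf_image_pair (f : γ → β) (S : Finset γ) (v : β) :
    allocOf (S.image fun x => (f x, x)) v = S.filter (f · = v) := by
  ext x
  simp [allocOf]

lemma allocOf_gAlloc_id (u : ℕ → β) (k : ℕ) (v : β) :
    allocOf (gAlloc u id k) v = (Icc 1 k).filter (u · = v) :=
  allocOf_image_pair u _ v

lemma isFullAlloc_image_pair [Fintype β] (f : γ → β) (R : Finset γ) :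
    IsFullAlloc univ R (R.image fun x => (f x, x)) := by
  refine ⟨⟨?_, ?_⟩, fun x hx => ⟨f x, mem_image_of_mem _ hx⟩⟩
  · rintro _ hp
    obtain ⟨x, hx, rfl⟩ := mem_image.1 hp
    exact ⟨mem_univ _, hx⟩
  · rintro _ hp _ hq hpq
    obtain ⟨x, -, rfl⟩ := mem_image.1 hp
    obtain ⟨y, -, rfl⟩ := mem_image.1 hq
    simp_all

end Allocation

section BlockVal

variable {β γ ι : Type*} [DecidableEq ι]

/-- A block `b = κ x` met by `S` in `k ≥ 1` elements contributes `w b * (1 + (1 - c) * (k - 1))`: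
a mixture of the modular function `x ↦ w (κ x)` and the weighted coverage function of the blocks. -/
def blockVal (c : ℝ) (κ : γ → ι) (w : ι → ℝ) (S : Finset γ) : ℝ :=
  (1 - c) * ∑ x ∈ S, w (κ x) + c * ∑ b ∈ S.image κ, w b

variable {c : ℝ} {κ : γ → ι} {w : ι → ℝ}

@[simp]
lemma blockVal_empty : blockVal c κ w ∅ = 0 := by
  simp [blockVal]

lemma blockVal_singleton (x : γ) : blockVal c κ w {x} = w (κ x) := by
  simp only [blockVal, sum_singleton, image_singleton]
  ring

lemma blockVal_insert_sub [DecidableEq γ] {S : Finset γ} {x : γ} (hx : x ∉ S) :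
    blockVal c κ w (insert x S) - blockVal c κ w S =
      if κ x ∈ S.image κ then (1 - c) * w (κ x) else w (κ x) := by
  unfold blockVal
  rw [sum_insert hx, image_insert]
  split_ifs with h
  · rw [insert_eq_of_mem h]
    ring
  · rw [sum_insert h]
    ring

lemma blockVal_of_injOn {S : Finset γ} (h : Set.InjOn κ S) :
    blockVal c κ w S = ∑ x ∈ S, w (κ x) := by
  rw [blockVal, sum_image h]
  ring

section Nonneg

variable (hc0 : 0 ≤ c) (hw : ∀ b, 0 ≤ w b)
include hc0 hw

lemma one_sub_mul_blockVal_singleton_le [DecidableEq γ] {S : Finset γ} {x : γ} (hx : x ∉ S) :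
    (1 - c) * blockVal c κ w {x} ≤ blockVal c κ w (insert x S) - blockVal c κ w S := by
  rw [blockVal_singleton, blockVal_insert_sub hx]
  split_ifs
  · rfl
  · nlinarith [hw (κ x)]

lemma blockVal_insert_sub_antitone [DecidableEq γ] {S T : Finset γ} {x : γ} (hST : S ⊆ T)
    (hx : x ∉ T) :
    blockVal c κ w (insert x T) - blockVal c κ w T ≤
      blockVal c κ w (insert x S) - blockVal c κ w S := by
  rw [blockVal_insert_sub hx, blockVal_insert_sub fun h => hx (hST h)]
  have := image_subset_image (f := κ) hST
  split_ifs <;> first | rfl | nlinarith [hw (κ x)] | tauto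

lemma blockVal_mono (hc1 : c ≤ 1) : Monotone (blockVal c κ w) := fun _ _ hST =>
  add_le_add
    (mul_le_mul_of_nonneg_left (sum_le_sum_of_subset_of_nonneg hST fun _ _ _ => hw _)
      (sub_nonneg.2 hc1))
    (mul_le_mul_of_nonneg_left
      (sum_le_sum_of_subset_of_nonneg (image_subset_image hST) fun _ _ _ => hw _) hc0)

end Nonneg

lemma totalVal_blockVal_image_pair [DecidableEq γ] [Fintype β] [DecidableEq β]
    (κ : β → γ → ι) (f : γ → β) {S : Finset γ} (h : Set.InjOn (fun x => κ (f x) x) S) :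
    totalVal univ (fun v => blockVal c (κ v) w) (S.image fun x => (f x, x)) =
      ∑ x ∈ S, w (κ (f x) x) := by
  unfold totalVal
  simp only [allocOf_image_pair]
  rw [← sum_fiberwise S f]
  refine sum_congr rfl fun v _ => ?_
  have hfib : ∀ x ∈ S.filter (f · = v), κ v x = κ (f x) x := by
    intro x hx
    rw [(mem_filter.1 hx).2]
  rw [blockVal_of_injOn, sum_congr rfl fun x hx => congrArg w (hfib x hx)]
  intro x hx y hy hxy
  exact h (mem_filter.1 hx).1 (mem_filter.1 hy).1 ((hfib x hx).symm.trans (hxy.trans (hfib y hy)))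

end BlockVal

section TightInstance

def altUser (i : ℕ) : Bool := decide (Odd i)

lemma altUser_succ (i : ℕ) : altUser (i + 1) = !altUser i := by
  simp only [altUser, Nat.odd_add_one, decide_not]

/-- User `v`'s blocks are `{j, j + 1}` with `altUser j = v`; for `v = false` item `1` forms the
block `{1}` on its own, labelled `0`. -/
def blockStart (v : Bool) (x : ℕ) : ℕ := if altUser x = v then x else x - 1

/-- The block labelled `j ≥ 1` weighs the greedy gain `(d (1 - c)) ^ j` of step `j`; the lone
block `{1}` weighs `1 - c`, which makes the discriminant of step `1` equal to `d` as well. -/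
def blockWeight (c d : ℝ) (j : ℕ) : ℝ := if j = 0 then 1 - c else (d * (1 - c)) ^ j

def tightVal (c d : ℝ) : Bool → Finset ℕ → ℝ :=
  fun v => blockVal c (blockStart v) (blockWeight c d)

variable {c d : ℝ}

lemma blockWeight_nonneg (hc1 : c ≤ 1) (hd : 0 ≤ d) (j : ℕ) : 0 ≤ blockWeight c d j := by
  unfold blockWeight
  split_ifs
  · linarith
  · exact pow_nonneg (mul_nonneg hd (sub_nonneg.2 hc1)) j

lemma blockWeight_le_pow (hg0 : 0 ≤ d * (1 - c)) (hg1 : d * (1 - c) ≤ 1) {k j : ℕ} (hkj : k < j) :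
    blockWeight c d j ≤ (d * (1 - c)) ^ (k + 1) := by
  rw [blockWeight, if_neg (by omega)]
  exact pow_le_pow_of_le_one hg0 hg1 hkj

lemma pow_le_blockWeight (hg0 : 0 ≤ d * (1 - c)) (hg1 : d * (1 - c) ≤ 1) {j k : ℕ} (hj : j ≠ 0)
    (hjk : j ≤ k) : (d * (1 - c)) ^ k ≤ blockWeight c d j := by
  rw [blockWeight, if_neg hj]
  exact pow_le_pow_of_le_one hg0 hg1 hjk

lemma margP_tightVal {k x : ℕ} (hkx : k < x) (v : Bool) :
    margP (tightVal c d) v x (gAlloc altUser id k) =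
      if blockStart v x ∈ (Icc 1 k).filter (altUser · = v)
      then (1 - c) * blockWeight c d (blockStart v x) else blockWeight c d (blockStart v x) := by
  have hfix : ((Icc 1 k).filter (altUser · = v)).image (blockStart v) =
      (Icc 1 k).filter (altUser · = v) := by
    have hid : Set.EqOn (blockStart v) id ((Icc 1 k).filter (altUser · = v)) :=
      fun y hy => if_pos (mem_filter.1 hy).2
    rw [image_congr hid, image_id]
  have hx : x ∉ (Icc 1 k).filter (altUser · = v) := by
    simp only [mem_filter, mem_Icc]
    omega
  rw [margP, allocOf_gAlloc_id, tightVal, blockVal_insert_sub hx, hfix]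

lemma margP_tightVal_self (k : ℕ) :
    margP (tightVal c d) (altUser (k + 1)) (k + 1) (gAlloc altUser id k) =
      (d * (1 - c)) ^ (k + 1) := by
  rw [margP_tightVal (lt_add_one k)]
  simp [blockStart, blockWeight]

lemma margP_tightVal_other {k : ℕ} {v : Bool} (hv : v ≠ altUser (k + 1)) :
    margP (tightVal c d) v (k + 1) (gAlloc altUser id k) = (1 - c) * (d * (1 - c)) ^ k := by
  have hk : altUser k = v := by
    revert hv
    rw [altUser_succ]
    cases v <;> cases altUser k <;> decide
  have hstart : blockStart v (k + 1) = k := by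
    simp [blockStart, Ne.symm hv]
  rw [margP_tightVal (lt_add_one k), hstart]
  rcases Nat.eq_zero_or_pos k with rfl | hk0
  · simp [blockWeight]
  · simp [blockWeight, hk, Nat.one_le_iff_ne_zero.1 hk0]

lemma margP_tightVal_le (hc0 : 0 ≤ c) (hc1 : c ≤ 1) (hd1 : 1 ≤ d) (hg1 : d * (1 - c) ≤ 1)
    {k x : ℕ} (hkx : k < x) (v : Bool) :
    margP (tightVal c d) v x (gAlloc altUser id k) ≤ (d * (1 - c)) ^ (k + 1) := by
  have hg0 : 0 ≤ d * (1 - c) := mul_nonneg (by linarith) (sub_nonneg.2 hc1)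
  by_cases hlag : x = k + 1 ∧ v ≠ altUser (k + 1)
  · obtain ⟨rfl, hv⟩ := hlag
    rw [margP_tightVal_other hv, pow_succ]
    nlinarith [mul_nonneg (mul_nonneg (sub_nonneg.2 hd1) (sub_nonneg.2 hc1)) (pow_nonneg hg0 k)]
  · have hstart : k < blockStart v x := by
      unfold blockStart
      split_ifs with hown
      · exact hkx
      · rcases Nat.lt_or_ge (k + 1) x with hlt | hle
        · omega
        · obtain rfl : x = k + 1 := by omega
          exact absurd ⟨rfl, Ne.symm hown⟩ hlag
    have hw := blockWeight_le_pow hg0 hg1 hstart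
    have hw0 := blockWeight_nonneg hc1 (by linarith : 0 ≤ d) (blockStart v x)
    rw [margP_tightVal hkx]
    split_ifs <;> nlinarith

lemma totalVal_tightVal_gAlloc (n : ℕ) :
    totalVal univ (tightVal c d) (gAlloc altUser id n) = ∑ x ∈ Icc 1 n, blockWeight c d x := by
  rw [gAlloc_id]
  unfold tightVal
  rw [totalVal_blockVal_image_pair]
  · simp [blockStart]
  · intro x _ y _ hxy
    simpa [blockStart] using hxy

lemma totalVal_tightVal_swap (n : ℕ) :
    totalVal univ (tightVal c d) ((Icc 1 n).image fun x => (!altUser x, x)) =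
      ∑ x ∈ Icc 1 n, blockWeight c d (x - 1) := by
  have hstart : ∀ x, blockStart (!altUser x) x = x - 1 := fun x => by
    cases h : altUser x <;> simp [blockStart, h]
  unfold tightVal
  rw [totalVal_blockVal_image_pair]
  · simp only [hstart]
  · intro x hx y hy hxy
    simp only [coe_Icc, Set.mem_Icc, hstart] at hx hy hxy
    omega

lemma mul_sum_blockWeight (hd : d ≠ 0) (m : ℕ) :
    (c + 1 / d) * ∑ x ∈ Icc 1 (m + 1), blockWeight c d x =
      ∑ x ∈ Icc 1 (m + 1), blockWeight c d (x - 1) + c * (d * (1 - c)) ^ (m + 1) := by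
  induction m with
  | zero =>
    simp only [zero_add, Icc_self, sum_singleton, blockWeight, one_ne_zero, tsub_self, if_true,
      if_false, pow_one]
    field_simp
    ring
  | succ m ih =>
    rw [sum_Icc_succ_top (b := m + 1) (by omega), sum_Icc_succ_top (b := m + 1) (by omega),
      mul_add, ih]
    simp only [blockWeight, Nat.add_sub_cancel, Nat.add_one_ne_zero, if_false]
    field_simp
    ring

lemma mul_pow_le_sum_blockWeight_pred (hc1 : c ≤ 1) (hd : 0 ≤ d) (hg1 : d * (1 - c) ≤ 1)
    (m : ℕ) : m * (d * (1 - c)) ^ (m + 1) ≤ ∑ x ∈ Icc 1 (m + 1), blockWeight c d (x - 1) := by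
  have hg0 : 0 ≤ d * (1 - c) := mul_nonneg hd (sub_nonneg.2 hc1)
  calc (m : ℝ) * (d * (1 - c)) ^ (m + 1)
      = (Ioc 1 (m + 1)).card • (d * (1 - c)) ^ (m + 1) := by simp
    _ ≤ ∑ x ∈ Ioc 1 (m + 1), blockWeight c d (x - 1) := by
      refine card_nsmul_le_sum _ _ _ fun x hx => ?_
      rw [mem_Ioc] at hx
      exact pow_le_blockWeight hg0 hg1 (by omega) (by omega)
    _ ≤ ∑ x ∈ Icc 1 (m + 1), blockWeight c d (x - 1) :=
      sum_le_sum_of_subset_of_nonneg Ioc_subset_Icc_self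
        fun _ _ _ => blockWeight_nonneg hc1 hd _

lemma sum_blockWeight_pred_pos (hc1 : c < 1) (hd : 0 ≤ d) (m : ℕ) :
    0 < ∑ x ∈ Icc 1 (m + 1), blockWeight c d (x - 1) :=
  calc (0 : ℝ) < blockWeight c d (1 - 1) := by simpa [blockWeight] using hc1
    _ ≤ ∑ x ∈ Icc 1 (m + 1), blockWeight c d (x - 1) :=
      single_le_sum (f := fun x => blockWeight c d (x - 1))
        (fun _ _ => blockWeight_nonneg hc1.le hd _) (by simp)

lemma sum_blockWeight_le (hc0 : 0 ≤ c) (hc1 : c ≤ 1) (hd1 : 1 ≤ d) (hg1 : d * (1 - c) ≤ 1)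
    {ε : ℝ} {m : ℕ} (hm : 1 ≤ ε * m) :
    ∑ x ∈ Icc 1 (m + 1), blockWeight c d x ≤
      (1 / (c + 1 / d) + ε) * ∑ x ∈ Icc 1 (m + 1), blockWeight c d (x - 1) := by
  set greedy := ∑ x ∈ Icc 1 (m + 1), blockWeight c d x
  set opt := ∑ x ∈ Icc 1 (m + 1), blockWeight c d (x - 1)
  set tail := (d * (1 - c)) ^ (m + 1)
  have hK : 0 < c + 1 / d := by positivity
  have hcK : c / (c + 1 / d) ≤ 1 :=
    div_le_one_of_le₀ (le_add_of_nonneg_right (by positivity)) hK.le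
  have htail0 : 0 ≤ tail := pow_nonneg (mul_nonneg (by linarith) (sub_nonneg.2 hc1)) _
  have hε : 0 ≤ ε := (pos_of_mul_pos_left (by linarith) m.cast_nonneg).le
  have htail : tail ≤ ε * opt :=
    calc tail ≤ ε * m * tail := le_mul_of_one_le_left htail0 hm
      _ = ε * (m * tail) := mul_assoc _ _ _
      _ ≤ ε * opt := mul_le_mul_of_nonneg_left
        (mul_pow_le_sum_blockWeight_pred hc1 (by linarith) hg1 m) hε
  have hgreedy : greedy = opt / (c + 1 / d) + c / (c + 1 / d) * tail := by
    rw [div_mul_eq_mul_div, ← add_div, eq_div_iff hK.ne', mul_comm]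
    exact mul_sum_blockWeight (by positivity) m
  calc greedy = opt / (c + 1 / d) + c / (c + 1 / d) * tail := hgreedy
    _ ≤ opt / (c + 1 / d) + tail := by
      have := mul_le_of_le_one_left htail0 hcK
      linarith
    _ ≤ (1 / (c + 1 / d) + ε) * opt := by
      rw [add_mul, one_div_mul_eq_div]
      linarith

end TightInstance

/-- Tightness of the guarantee `min(1, 1/(c + 1/d))` for the greedy
algorithm on the submodular partition problem: for every `c ∈ [0,1)`, `1 ≤ d ≤ 1/(1−c)`
and `ε > 0` there is an instance (two users, resources in `ℕ`) with curvature bound `c`,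
all discriminants at least `d`, and a full allocation `Ω` with `Z(Ω) > 0` such that
`Z(G) ≤ (1/(c + 1/d) + ε)·Z(Ω)`. -/
theorem partition_discriminant_guarantee_tight
    (c : ℝ) (hc0 : 0 ≤ c) (hc1 : c < 1)
    (d : ℝ) (hd1 : 1 ≤ d) (hdc : d ≤ 1 / (1 - c))
    (ε : ℝ) (hε : 0 < ε) :
    ∃ (n : ℕ) (R : Finset ℕ) (Zu : Bool → Finset ℕ → ℝ) (u : ℕ → Bool) (r : ℕ → ℕ)
      (Ω : Finset (Bool × ℕ)),
      R.card = n ∧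
      (∀ v : Bool, ∀ S T : Finset ℕ, S ⊆ T → T ⊆ R → Zu v S ≤ Zu v T) ∧
      (∀ v : Bool, ∀ S T : Finset ℕ, ∀ x, S ⊆ T → T ⊆ R → x ∈ R → x ∉ T →
        Zu v (insert x T) - Zu v T ≤ Zu v (insert x S) - Zu v S) ∧
      (∀ v : Bool, Zu v (∅ : Finset ℕ) = 0) ∧
      (∀ v : Bool, ∀ S ⊆ R, ∀ x ∈ R, x ∉ S → 0 < Zu v {x} →
        (1 - c) * Zu v {x} ≤ Zu v (insert x S) - Zu v S) ∧
      Set.InjOn r (Set.Icc 1 n) ∧ (Finset.Icc 1 n).image r = R ∧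
      (∀ i ∈ Finset.Icc 1 n, ∀ v : Bool, ∀ r' ∈ R,
        r' ∉ (Finset.Icc 1 (i - 1)).image r →
        margP Zu v r' (gAlloc u r (i - 1)) ≤ margP Zu (u i) (r i) (gAlloc u r (i - 1))) ∧
      (∀ i ∈ Finset.Icc 1 n, ∀ v : Bool, v ≠ u i →
        d * margP Zu v (r i) (gAlloc u r (i - 1)) ≤
          margP Zu (u i) (r i) (gAlloc u r (i - 1))) ∧
      IsFullAlloc (Finset.univ : Finset Bool) R Ω ∧
      0 < totalVal (Finset.univ : Finset Bool) Zu Ω ∧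
      totalVal (Finset.univ : Finset Bool) Zu (gAlloc u r n) ≤
        (1 / (c + 1 / d) + ε) * totalVal (Finset.univ : Finset Bool) Zu Ω := by
  have hw := blockWeight_nonneg hc1.le (by linarith : 0 ≤ d)
  have hg1 : d * (1 - c) ≤ 1 := (le_div_iff₀ (by linarith)).1 (by simpa using hdc)
  obtain ⟨m, hm⟩ : ∃ m : ℕ, 1 ≤ ε * m :=
    ⟨⌈ε⁻¹⌉₊, (div_le_iff₀' hε).1 (by rw [one_div]; exact Nat.le_ceil _)⟩
  refine ⟨m + 1, Icc 1 (m + 1), tightVal c d, altUser, id,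
    (Icc 1 (m + 1)).image fun x => (!altUser x, x), by simp,
    fun _ _ _ hST _ => blockVal_mono hc0 hw hc1.le hST,
    fun _ _ _ _ hST _ _ hx => blockVal_insert_sub_antitone hc0 hw hST hx,
    fun _ => blockVal_empty,
    fun _ _ _ _ _ hx _ => one_sub_mul_blockVal_singleton_le hc0 hw hx,
    Set.injOn_id _, image_id, ?_, ?_, isFullAlloc_image_pair _ _, ?_, ?_⟩
  · intro i hi v r' hr' hfresh
    obtain ⟨k, rfl⟩ : ∃ k, i = k + 1 := ⟨i - 1, by simp at hi; omega⟩
    rw [Nat.add_sub_cancel, id, margP_tightVal_self]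
    refine margP_tightVal_le hc0 hc1.le hd1 hg1 ?_ v
    simp only [image_id, mem_Icc, not_and, not_le] at hfresh hr'
    omega
  · intro i hi v hv
    obtain ⟨k, rfl⟩ : ∃ k, i = k + 1 := ⟨i - 1, by simp at hi; omega⟩
    rw [Nat.add_sub_cancel, id, margP_tightVal_other hv, margP_tightVal_self, pow_succ]
    linarith
  · rw [totalVal_tightVal_swap]
    exact sum_blockWeight_pred_pos hc1 (by linarith) m
  · rw [totalVal_tightVal_gAlloc, totalVal_tightVal_swap]
    exact sum_blockWeight_le hc0 hc1.le hd1 hg1 hm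
end
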